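/- arXiv:1809.03059 — 3 statements merged into one kernel-verified Lean document; each statement's English description precedes it below -/
import Mathlib

section
/- Let R be a Z^n-graded Noetherian ring over a field and b ∈ ℕ_+^n. If R is a normal domain, then the subring T_b(R) = ⊕_{d ∈ H^{(b)}} R_d is a normal domain. -/
/-!
STATEMENT 3: if `R` is a `ℤⁿ`-graded Noetherian normal domain over a field,
then `T_b(R)` is a normal domain.
-/

noncomputable section

open DirectSum

def Hset {n : ℕ} (b : Fin n → ℕ) : Set (Fin n → ℤ) :=
  { d | ∀ i, (b i : ℤ) ∣ d i }

def Tb {n : ℕ} {R : Type} [CommRing R] (𝒜 : (Fin n → ℤ) → AddSubgroup R)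
    (b : Fin n → ℕ) : Subring R :=
  Subring.closure (⋃ d ∈ Hset b, (𝒜 d : Set R))

section aux

variable {n : ℕ} {R : Type} [CommRing R]
  (𝒜 : (Fin n → ℤ) → AddSubgroup R) [GradedRing 𝒜] (b : Fin n → ℕ)

lemma Hset.zero_mem : (0 : Fin n → ℤ) ∈ Hset b := fun i => dvd_zero _
lemma Hset.add_mem {d e : Fin n → ℤ} (hd : d ∈ Hset b) (he : e ∈ Hset b) :
    d + e ∈ Hset b := fun i => dvd_add (hd i) (he i)
lemma Hset.sub_of_add {d e f : Fin n → ℤ} (h : d + e = f) (hd : d ∈ Hset b)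
    (hf : f ∈ Hset b) : e ∈ Hset b := by
  intro i
  have : e i = f i - d i := by
    have := congrFun h i; simp at this; omega
  rw [this]
  exact dvd_sub (hf i) (hd i)

/-- the subring of elements supported (in the grading) on `Hset b`. -/
def Sb : Subring R where
  carrier := { x | ∀ d, d ∉ Hset b → (DirectSum.decompose 𝒜 x d : R) = 0 }
  zero_mem' := by intro d _; rw [DirectSum.decompose_zero]; simp
  one_mem' := by
    intro d hd
    have h0 : (0 : Fin n → ℤ) ∈ Hset b := Hset.zero_mem b
    have : (1 : R) ∈ 𝒜 0 := SetLike.one_mem_graded 𝒜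
    rw [DirectSum.decompose_of_mem_ne 𝒜 this (fun h : (0:Fin n → ℤ) = d => hd (h ▸ h0))]
  add_mem' := by
    intro x y hx hy d hd
    rw [DirectSum.decompose_add]
    simp only [DirectSum.add_apply, AddSubgroup.coe_add]
    rw [hx d hd, hy d hd, add_zero]
  neg_mem' := by
    intro x hx d hd
    rw [DirectSum.decompose_neg]
    have : ((-(DirectSum.decompose 𝒜 x)) d : R) = -((DirectSum.decompose 𝒜 x) d : R) := by
      rw [DFinsupp.neg_apply]; rfl
    rw [this, hx d hd, neg_zero]
  mul_mem' := by
    classical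
    intro x y hx hy d hd
    rw [DirectSum.decompose_mul, DirectSum.coe_mul_apply]
    refine Finset.sum_eq_zero fun ij hij => ?_
    simp only [Finset.mem_filter, Finset.mem_product, DFinsupp.mem_support_toFun] at hij
    obtain ⟨⟨h1, h2⟩, hsum⟩ := hij
    by_cases hi : ij.1 ∈ Hset b
    · have hj : ij.2 ∉ Hset b := fun hj => hd (hsum ▸ Hset.add_mem b hi hj)
      rw [hy ij.2 hj, mul_zero]
    · rw [hx ij.1 hi, zero_mul]


lemma Tb_eq_Sb : Tb 𝒜 b = Sb 𝒜 b := by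
  classical
  apply le_antisymm
  · rw [Tb, Subring.closure_le]
    rintro x hx
    simp only [Set.mem_iUnion, SetLike.mem_coe] at hx
    obtain ⟨d, hd, hxd⟩ := hx
    intro e he
    rw [DirectSum.decompose_of_mem_ne 𝒜 hxd (fun h : d = e => he (h ▸ hd))]
  · intro x hx
    rw [← DirectSum.sum_support_decompose 𝒜 x]
    refine Subring.sum_mem _ fun d hd => ?_
    refine Subring.subset_closure ?_
    simp only [Set.mem_iUnion, SetLike.mem_coe]
    refine ⟨d, ?_, (DirectSum.decompose 𝒜 x d).2⟩
    by_contra hdH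
    exact (DFinsupp.mem_support_iff.mp hd) (Subtype.ext (hx d hdH))


lemma decompose_sum_apply (F : Finset (Fin n → ℤ)) (c : (Fin n → ℤ) → R)
    (hc : ∀ d, c d ∈ 𝒜 d) (e : Fin n → ℤ) :
    (DirectSum.decompose 𝒜 (∑ d ∈ F, c d) e : R) = if e ∈ F then c e else 0 := by
  classical
  have : DirectSum.decompose 𝒜 (∑ d ∈ F, c d) = ∑ d ∈ F, DirectSum.decompose 𝒜 (c d) :=
    map_sum (DirectSum.decomposeAddEquiv 𝒜) _ _
  rw [this, DFinsupp.finset_sum_apply, AddSubmonoidClass.coe_finset_sum]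
  by_cases heF : e ∈ F
  · rw [if_pos heF, Finset.sum_eq_single_of_mem e heF
      (fun d _ hde => DirectSum.decompose_of_mem_ne 𝒜 (hc d) hde)]
    exact DirectSum.decompose_of_mem_same 𝒜 (hc e)
  · rw [if_neg heF]
    exact Finset.sum_eq_zero fun d hd =>
      DirectSum.decompose_of_mem_ne 𝒜 (hc d) (fun h => heF (h ▸ hd))

variable [IsDomain R]

lemma mem_Sb_of_mul {q x : R} (hq : q ∈ Sb 𝒜 b) (hq0 : q ≠ 0)
    (hqx : q * x ∈ Sb 𝒜 b) : x ∈ Sb 𝒜 b := by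
  classical
  set F := (DirectSum.decompose 𝒜 x).support with hF
  set xH := ∑ d ∈ F.filter (· ∈ Hset b), (DirectSum.decompose 𝒜 x d : R) with hxH
  have hxHmem : xH ∈ Sb 𝒜 b := by
    intro e he
    rw [hxH, decompose_sum_apply 𝒜 _ _ (fun d => (DirectSum.decompose 𝒜 x d).2)]
    rw [if_neg]
    intro hmem
    exact he (Finset.mem_filter.mp hmem).2
  -- xN := x - xH has no components in Hset b
  have hxN : ∀ e ∈ Hset b, (DirectSum.decompose 𝒜 (x - xH) e : R) = 0 := by
    intro e he
    rw [DirectSum.decompose_sub]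
    have h1 : ((DirectSum.decompose 𝒜 x - DirectSum.decompose 𝒜 xH) e : R)
        = (DirectSum.decompose 𝒜 x e : R) - (DirectSum.decompose 𝒜 xH e : R) := by
      rw [DFinsupp.sub_apply]; rfl
    rw [h1, hxH, decompose_sum_apply 𝒜 _ _ (fun d => (DirectSum.decompose 𝒜 x d).2)]
    by_cases hmem : e ∈ F.filter (· ∈ Hset b)
    · rw [if_pos hmem, sub_self]
    · rw [if_neg hmem]
      have : e ∉ F := fun hF' => hmem (Finset.mem_filter.mpr ⟨hF', he⟩)
      rw [DFinsupp.notMem_support_iff.mp this]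
      simp
  -- q * (x - xH) is zero
  have hqxN : q * (x - xH) = 0 := by
    have hmemSb : q * (x - xH) ∈ Sb 𝒜 b := by
      have : q * (x - xH) = q * x - q * xH := by ring
      rw [this]
      exact Subring.sub_mem _ hqx (Subring.mul_mem _ hq hxHmem)
    -- all graded components of q * (x - xH) vanish
    have hall : ∀ e, (DirectSum.decompose 𝒜 (q * (x - xH)) e : R) = 0 := by
      intro e
      by_cases he : e ∈ Hset b
      · rw [DirectSum.decompose_mul, DirectSum.coe_mul_apply]
        refine Finset.sum_eq_zero fun ij hij => ?_
        simp only [Finset.mem_filter, Finset.mem_product, DFinsupp.mem_support_toFun] at hij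
        obtain ⟨⟨h1, h2⟩, hsum⟩ := hij
        by_cases hi : ij.1 ∈ Hset b
        · have hj : ij.2 ∈ Hset b := Hset.sub_of_add b hsum hi he
          rw [hxN ij.2 hj, mul_zero]
        · rw [hq ij.1 hi, zero_mul]
      · exact hmemSb e he
    have : DirectSum.decompose 𝒜 (q * (x - xH)) = 0 := by
      refine DFinsupp.ext fun e => ?_
      exact Subtype.ext (by rw [hall e]; rfl)
    have := congrArg (DirectSum.decompose 𝒜).symm this
    rwa [Equiv.symm_apply_apply, DirectSum.decompose_symm_zero] at this
  rcases mul_eq_zero.mp hqxN with h | h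
  · exact absurd h hq0
  · rw [sub_eq_zero.mp h]; exact hxHmem

end aux

theorem Tb_normal_domain {k : Type} [Field k] {n : ℕ} {R : Type} [CommRing R]
    [Algebra k R] [IsNoetherianRing R]
    (𝒜 : (Fin n → ℤ) → AddSubgroup R) [GradedRing 𝒜]
    (b : Fin n → ℕ) (hb : ∀ i, 0 < b i)
    [IsDomain R] [IsIntegrallyClosed R] :
    IsDomain (Tb 𝒜 b) ∧ IsIntegrallyClosed (Tb 𝒜 b) := by
  haveI hdom : IsDomain (Tb 𝒜 b) := inferInstance
  refine ⟨hdom, ?_⟩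
  set T := Tb 𝒜 b with hT
  set L := FractionRing R
  have hTL : ∀ t : T, algebraMap T L t = algebraMap R L (t : R) := fun t => by
    rw [IsScalarTower.algebraMap_apply T R L]
    rfl
  have hginj : Function.Injective (Algebra.ofId T L) := by
    intro a b hab
    have : algebraMap T L a = algebraMap T L b := hab
    rw [hTL, hTL] at this
    exact Subtype.ext (IsFractionRing.injective R L this)
  set K := FractionRing T
  set ψ : K →ₐ[T] L := IsFractionRing.liftAlgHom (K := K) hginj with hψ
  rw [isIntegrallyClosed_iff K]
  intro x hx
  have h1 : IsIntegral T (ψ x) := hx.map ψ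
  have h2 : IsIntegral R (ψ x) := IsIntegral.tower_top h1
  obtain ⟨r, hr⟩ := IsIntegrallyClosed.isIntegral_iff.mp h2
  obtain ⟨p, q, hqnzd, hpq⟩ := IsFractionRing.div_surjective (A := T) x
  have hq0 : (q : T) ≠ 0 := nonZeroDivisors.ne_zero hqnzd
  have haq0 : algebraMap T K q ≠ 0 :=
    IsFractionRing.to_map_ne_zero_of_mem_nonZeroDivisors hqnzd
  have hx_eq : x * algebraMap T K q = algebraMap T K p := by
    rw [← hpq, div_mul_cancel₀ _ haq0]
  -- push to L
  have hL : ψ x * algebraMap R L (q : R) = algebraMap R L (p : R) := by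
    have := congrArg ψ hx_eq
    rwa [map_mul, ψ.commutes, ψ.commutes, hTL, hTL] at this
  rw [← hr, ← map_mul] at hL
  have hrq : r * (q : R) = (p : R) := IsFractionRing.injective R L hL
  -- conclude r ∈ T
  have hrT : r ∈ T := by
    rw [hT, Tb_eq_Sb]
    refine mem_Sb_of_mul 𝒜 b (q := (q : R)) ?_ ?_ ?_
    · rw [← Tb_eq_Sb]; exact q.2
    · exact fun h => hq0 (Subtype.ext h)
    · rw [mul_comm, hrq, ← Tb_eq_Sb]
      exact p.2
  refine ⟨⟨r, hrT⟩, ?_⟩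
  have hψinj : Function.Injective ψ := RingHom.injective (ψ : K →+* L)
  apply hψinj
  rw [ψ.commutes, hTL]
  exact hr

end
end

section
/- Let R be a Z^n-graded ring, b ∈ ℕ_+^n, R' = T_b(R), M a Z^n-graded R-module, and f ∈ R a homogeneous element with deg(f) ∈ H^{(b)}. Then localization commutes with T_b: T_b(M_f) ≅ (T_b(M))_f as graded R'_f-modules. -/
/-!
STATEMENT 5: for a homogeneous `f` with `deg f ∈ H^{(b)}`, localization commutes
with `T_b`:  `T_b(M_f) ≅ (T_b M)_f`.  Concretely: the elements of `T_b(M_f)` are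
exactly the fractions `m / fʲ` with `m ∈ T_b(M)` (which expresses that the natural
map `(T_b M)_f → T_b(M_f)` is an isomorphism of graded `T_b(R)_f`-modules).
-/

noncomputable section

/-- The degree-`d` graded component of the localized module `M_f`, where `f` is
homogeneous of degree `df`: fractions `m / fʲ` with `m` homogeneous of degree
`d + j·df`. -/
def locPiece {n : ℕ} {R M : Type} [CommRing R] [AddCommGroup M] [Module R M]
    (ℳ : (Fin n → ℤ) → AddSubgroup M) (f : R) (df : Fin n → ℤ) (d : Fin n → ℤ) :
    Set (LocalizedModule (Submonoid.powers f) M) :=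
  { x | ∃ (m : M) (j : ℕ), m ∈ ℳ (d + j • df) ∧
      x = LocalizedModule.mk m ⟨f ^ j, Submonoid.pow_mem _ (Submonoid.mem_powers f) j⟩ }

/-- `T_b` of a `ℤⁿ`-graded abelian group, given by its components. -/
def TbGroup {n : ℕ} {M : Type} [AddCommGroup M]
    (ℳ : (Fin n → ℤ) → AddSubgroup M) (b : Fin n → ℕ) : AddSubgroup M :=
  AddSubgroup.closure (⋃ d ∈ Hset b, (ℳ d : Set M))

theorem Tb_commutes_with_localization
    {k : Type} [Field k] {n : ℕ} {R M : Type} [CommRing R] [Algebra k R]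
    [AddCommGroup M] [Module R M]
    (𝒜 : (Fin n → ℤ) → AddSubgroup R) [GradedRing 𝒜]
    (ℳ : (Fin n → ℤ) → AddSubgroup M) [DirectSum.Decomposition ℳ]
    [SetLike.GradedSMul 𝒜 ℳ]
    (b : Fin n → ℕ) (hb : ∀ i, 0 < b i)
    (f : R) (df : Fin n → ℤ) (hf : f ∈ 𝒜 df) (hdf : df ∈ Hset b) :
    ∀ x : LocalizedModule (Submonoid.powers f) M,
      x ∈ AddSubgroup.closure (⋃ d ∈ Hset b, locPiece ℳ f df d) ↔
        ∃ (m : M) (j : ℕ), m ∈ TbGroup ℳ b ∧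
          x = LocalizedModule.mk m ⟨f ^ j, Submonoid.pow_mem _ (Submonoid.mem_powers f) j⟩ := by
  -- auxiliary: f^j • m stays in TbGroup
  have hsmul : ∀ (j : ℕ) (m : M), m ∈ TbGroup ℳ b → f ^ j • m ∈ TbGroup ℳ b := by
    intro j m hm
    induction hm using AddSubgroup.closure_induction with
    | mem y hy =>
      obtain ⟨d, hd, hyd⟩ := Set.mem_iUnion₂.1 hy
      refine AddSubgroup.subset_closure (Set.mem_iUnion₂.2 ⟨j • df + d, ?_, ?_⟩)
      · intro i
        have : ((j • df + d) : Fin n → ℤ) i = (j : ℤ) * df i + d i := by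
          simp [Pi.add_apply, Pi.smul_apply, zsmul_eq_mul]
        rw [this]
        exact dvd_add ((hdf i).mul_left _) (hd i)
      · exact SetLike.GradedSMul.smul_mem (SetLike.pow_mem_graded j hf) hyd
    | zero => simpa using (TbGroup ℳ b).zero_mem
    | add x y _ _ hx hy => simpa [smul_add] using (TbGroup ℳ b).add_mem hx hy
    | neg x _ hx => simpa using (TbGroup ℳ b).neg_mem hx
  intro x
  constructor
  · intro hx
    induction hx using AddSubgroup.closure_induction with
    | mem y hy =>
      obtain ⟨d, hd, m, j, hm, rfl⟩ := Set.mem_iUnion₂.1 hy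
      refine ⟨m, j, ?_, rfl⟩
      refine AddSubgroup.subset_closure (Set.mem_iUnion₂.2 ⟨d + j • df, ?_, hm⟩)
      intro i
      have : ((d + j • df) : Fin n → ℤ) i = d i + (j : ℤ) * df i := by
        simp [Pi.add_apply, Pi.smul_apply, zsmul_eq_mul]
      rw [this]
      exact dvd_add (hd i) ((hdf i).mul_left _)
    | zero => exact ⟨0, 0, (TbGroup ℳ b).zero_mem, by rw [LocalizedModule.zero_mk]⟩
    | add x y _ _ hx hy =>
      obtain ⟨m1, j1, hm1, rfl⟩ := hx
      obtain ⟨m2, j2, hm2, rfl⟩ := hy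
      refine ⟨f ^ j2 • m1 + f ^ j1 • m2, j1 + j2,
        (TbGroup ℳ b).add_mem (hsmul _ _ hm1) (hsmul _ _ hm2), ?_⟩
      rw [LocalizedModule.mk_add_mk]
      congr 1
      exact Subtype.ext (pow_add f j1 j2).symm
    | neg x _ hx =>
      obtain ⟨m, j, hm, rfl⟩ := hx
      exact ⟨-m, j, (TbGroup ℳ b).neg_mem hm, (LocalizedModule.mk_neg).symm⟩
  · rintro ⟨m, j, hm, rfl⟩
    induction hm using AddSubgroup.closure_induction with
    | mem y hy =>
      obtain ⟨d, hd, hyd⟩ := Set.mem_iUnion₂.1 hy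
      refine AddSubgroup.subset_closure (Set.mem_iUnion₂.2 ⟨d - j • df, ?_, ?_⟩)
      · intro i
        have : ((d - j • df) : Fin n → ℤ) i = d i - (j : ℤ) * df i := by
          simp [Pi.sub_apply, Pi.smul_apply, zsmul_eq_mul]
        rw [this]
        exact dvd_sub (hd i) ((hdf i).mul_left _)
      · exact ⟨y, j, by rwa [sub_add_cancel], rfl⟩
    | zero => rw [LocalizedModule.zero_mk]; exact AddSubgroup.zero_mem _
    | add y z _ _ hy hz =>
      have : LocalizedModule.mk (y + z)
          (⟨f ^ j, Submonoid.pow_mem _ (Submonoid.mem_powers f) j⟩ :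
            Submonoid.powers f) =
          LocalizedModule.mk y ⟨f ^ j, Submonoid.pow_mem _ (Submonoid.mem_powers f) j⟩ +
          LocalizedModule.mk z ⟨f ^ j, Submonoid.pow_mem _ (Submonoid.mem_powers f) j⟩ := by
        rw [LocalizedModule.mk_add_mk, ← smul_add, LocalizedModule.mk_cancel_common_left]
      rw [this]
      exact AddSubgroup.add_mem _ hy hz
    | neg y _ hy =>
      rw [LocalizedModule.mk_neg]
      exact AddSubgroup.neg_mem _ hy

end
end

section
/- Let Z be the scheme in (P^1)^n defined by the adjacent 2-minors x_{i,0}x_{i+1,1} − x_{i,1}x_{i+1,0}, i = 1,...,n−1, of the 2×n generic matrix. Then the number of minimal primes of this ideal (equivalently, of irreducible components of the correspondence scroll C(Z;b) for any b) is the Fibonacci number F_{n−1}, where F_0 = F_1 = 1 and F_k = F_{k−1} + F_{k−2}. -/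
/-!
STATEMENT 16: the ideal of adjacent 2×2 minors of the generic `2 × n` matrix has
exactly `F_{n-1}` minimal primes (Fibonacci numbers with `F₀ = F₁ = 1`, so
`F_{n-1} = Nat.fib n`); equivalently the correspondence scroll `C(Z;b)` has
`F_{n-1}` irreducible components.  Here `n = m + 1`.
-/

open MvPolynomial

noncomputable section

/-- The ideal of adjacent 2×2 minors `x_{i,0}x_{i+1,1} − x_{i,1}x_{i+1,0}`. -/
def adjacentMinorsIdeal (k : Type) [Field k] (m : ℕ) :
    Ideal (MvPolynomial (Fin (m + 1) × Fin 2) k) :=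
  Ideal.span { f | ∃ i : Fin m,
    f = X (i.castSucc, 0) * X (i.succ, 1) - X (i.castSucc, 1) * X (i.succ, 0) }

namespace AdjMinors

/-- representative (least element) of the block of `i` for cut set `D`. -/
def rep (D : Finset ℕ) : ℕ → ℕ
  | 0 => 0
  | i+1 => if i ∈ D then i+1 else rep D i

lemma rep_le (D : Finset ℕ) : ∀ i, rep D i ≤ i
  | 0 => le_refl 0
  | i+1 => by
      rw [rep]; split
      · exact le_refl _
      · exact (rep_le D i).trans (Nat.le_succ i)

lemma rep_interval (D : Finset ℕ) : ∀ i t, rep D i ≤ t → t < i → t ∉ D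
  | 0, t, h1, h2 => absurd h2 (Nat.not_lt_zero t)
  | i+1, t, h1, h2 => by
      rw [rep] at h1
      split at h1
      · omega
      · rcases Nat.lt_succ_iff_lt_or_eq.mp h2 with h | h
        · exact rep_interval D i t h1 h
        · subst h; assumption

lemma rep_notmem (D : Finset ℕ) : ∀ i, i ∉ D → rep D i ∉ D
  | 0, h => h
  | i+1, h => by
      rw [rep]; split
      · exact h
      · exact rep_notmem D i (by assumption)

lemma rep_eq_of (D : Finset ℕ) (i : ℕ) :
    ∀ j, i ≤ j → (∀ t, i ≤ t → t < j → t ∉ D) → rep D j = rep D i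
  | 0, h1, h2 => by
      have : i = 0 := Nat.le_zero.mp h1
      rw [this]
  | j+1, h1, h2 => by
      rcases Nat.lt_succ_iff_lt_or_eq.mp (Nat.lt_succ_of_le h1) with h | h
      · rw [rep, if_neg (h2 j (Nat.lt_succ_iff.mp h) (Nat.lt_succ_self j))]
        exact rep_eq_of D i j (Nat.lt_succ_iff.mp h)
          (fun t ht1 ht2 => h2 t ht1 (ht2.trans (Nat.lt_succ_self j)))
      · rw [h]

lemma rep_gt (D : Finset ℕ) (i d : ℕ) (hd : d ∈ D) (hdi : d < i) : d < rep D i := by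
  by_contra h
  exact rep_interval D i d (Nat.le_of_not_lt h) hdi hd

/-- `D` is a sparse cut set: all cuts interior, no two adjacent. -/
def Sparse (m : ℕ) (D : Finset ℕ) : Prop := ∀ d ∈ D, 1 ≤ d ∧ d + 1 ≤ m ∧ d + 1 ∉ D

lemma rep_ne_of_sep (D : Finset ℕ) (i d j : ℕ) (hd : d ∈ D) (h1 : i < d) (h2 : d < j) :
    rep D i ≠ rep D j := by
  have := rep_gt D j d hd h2
  have := rep_le D i
  omega

/-! ### Counting sparse subsets -/

def NoTwo (D : Finset ℕ) : Prop := ∀ d ∈ D, d + 1 ∉ D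

instance : DecidablePred NoTwo := fun D => inferInstanceAs (Decidable (∀ d ∈ D, d + 1 ∉ D))

lemma card_noTwo : ∀ K, ((Finset.Ico 1 (K+1)).powerset.filter NoTwo).card = Nat.fib (K+2) := by
  intro K
  induction K using Nat.strong_induction_on with
  | _ K IH =>
    match K with
    | 0 => decide
    | 1 => decide
    | (K+2) =>
      rw [← Finset.card_filter_add_card_filter_not
        (p := fun A => (K+2) ∈ A) (s := (Finset.Ico 1 (K+3)).powerset.filter NoTwo)]
      have e1 : ((Finset.Ico 1 (K+3)).powerset.filter NoTwo).filter (fun A => ¬ (K+2) ∈ A)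
          = (Finset.Ico 1 (K+2)).powerset.filter NoTwo := by
        ext A
        simp only [Finset.mem_filter, Finset.mem_powerset]
        constructor
        · rintro ⟨⟨hsub, hnt⟩, hmem⟩
          refine ⟨fun d hd => ?_, hnt⟩
          have := hsub hd
          simp only [Finset.mem_Ico] at this ⊢
          rcases this with ⟨h1, h2⟩
          refine ⟨h1, ?_⟩
          rcases Nat.lt_succ_iff_lt_or_eq.mp h2 with h | h
          · exact h
          · exact absurd (h ▸ hd) hmem
        · rintro ⟨hsub, hnt⟩
          have hsub2 : A ⊆ Finset.Ico 1 (K+3) := hsub.trans (by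
            apply Finset.Ico_subset_Ico le_rfl; omega)
          refine ⟨⟨hsub2, hnt⟩, fun hc => ?_⟩
          have := hsub hc
          simp only [Finset.mem_Ico] at this; omega
      have e2 : ((Finset.Ico 1 (K+3)).powerset.filter NoTwo).filter (fun A => (K+2) ∈ A)
          = ((Finset.Ico 1 (K+1)).powerset.filter NoTwo).image (insert (K+2)) := by
        ext A
        simp only [Finset.mem_filter, Finset.mem_powerset, Finset.mem_image]
        constructor
        · rintro ⟨⟨hsub, hnt⟩, hmem⟩
          refine ⟨A.erase (K+2), ⟨fun d hd => ?_, fun d hd => ?_⟩, Finset.insert_erase hmem⟩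
          · have hdA := Finset.mem_of_mem_erase hd
            have hne := Finset.ne_of_mem_erase hd
            have h1 := hsub hdA
            simp only [Finset.mem_Ico] at h1 ⊢
            refine ⟨h1.1, ?_⟩
            have : d ≠ K+1 := by
              intro h; exact hnt d hdA (by rw [h]; exact hmem)
            omega
          · intro hc
            exact hnt d (Finset.mem_of_mem_erase hd) (Finset.mem_of_mem_erase hc)
        · rintro ⟨B, ⟨hsub, hnt⟩, rfl⟩
          have hKB : K+2 ∉ B := by
            intro h; have := hsub h; simp only [Finset.mem_Ico] at this; omega
          refine ⟨⟨?_, ?_⟩, Finset.mem_insert_self _ _⟩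
          · intro d hd
            rcases Finset.mem_insert.mp hd with h | h
            · subst h; simp only [Finset.mem_Ico]; omega
            · have := hsub h; simp only [Finset.mem_Ico] at this ⊢; omega
          · intro d hd hc
            rcases Finset.mem_insert.mp hd with h | h
            · subst h
              rcases Finset.mem_insert.mp hc with h2 | h2
              · omega
              · have := hsub h2; simp only [Finset.mem_Ico] at this; omega
            · rcases Finset.mem_insert.mp hc with h2 | h2
              · have := hsub h; simp only [Finset.mem_Ico] at this; omega
              · exact hnt d h h2
      rw [e1, e2, Finset.card_image_of_injOn, IH K (by omega), IH (K+1) (by omega)]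
      · have h1 : Nat.fib (K+2+2) = Nat.fib (K+2) + Nat.fib (K+2+1) := Nat.fib_add_two
        have h2 : Nat.fib (K+1+2) = Nat.fib (K+2+1) := congrArg Nat.fib (by omega)
        omega
      · intro B1 h1 B2 h2 he
        simp only [Finset.coe_filter, Finset.mem_powerset, Set.mem_setOf_eq] at h1 h2
        have k1 : K+2 ∉ B1 := by
          intro h; have := h1.1 h; simp only [Finset.mem_Ico] at this; omega
        have k2 : K+2 ∉ B2 := by
          intro h; have := h2.1 h; simp only [Finset.mem_Ico] at this; omega
        have := congrArg (Finset.erase · (K+2)) he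
        simpa [Finset.erase_insert k1, Finset.erase_insert k2] using this

lemma count_sparse (m : ℕ) : {D : Finset ℕ | Sparse m D}.ncard = Nat.fib (m+1) := by
  have hset : {D : Finset ℕ | Sparse m D}
      = ↑((Finset.Ico 1 m).powerset.filter NoTwo) := by
    ext D
    simp only [Set.mem_setOf_eq, Finset.coe_filter, Finset.mem_powerset]
    constructor
    · intro h
      refine ⟨fun d hd => ?_, fun d hd => (h d hd).2.2⟩
      have := h d hd; simp only [Finset.mem_Ico]; omega
    · rintro ⟨hsub, hnt⟩ d hd
      have := hsub hd; simp only [Finset.mem_Ico] at this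
      exact ⟨this.1, by omega, hnt d hd⟩
  rw [hset, Set.ncard_coe_finset]
  match m with
  | 0 => decide
  | (m+1) => exact card_noTwo m


open MvPolynomial

noncomputable section
variable (k : Type) [Field k] (m : ℕ) (D : Finset ℕ)

/-- the monomial parametrization map -/
def phi : MvPolynomial (Fin (m+1) × Fin 2) k →ₐ[k] MvPolynomial (ℕ ⊕ ℕ × Fin 2) k :=
  aeval fun p => if (p.1 : ℕ) ∈ D then 0 else
    X (Sum.inl (p.1:ℕ)) * X (Sum.inr (rep D (p.1:ℕ), p.2))

/-- candidate minimal prime: columns in `D` plus 2-minors within blocks -/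
def Qd : Ideal (MvPolynomial (Fin (m+1) × Fin 2) k) :=
  Ideal.span {f | (∃ d : Fin (m+1), (d:ℕ) ∈ D ∧ ∃ c : Fin 2, f = X (d, c)) ∨
    (∃ i j : Fin (m+1), (i:ℕ) ∉ D ∧ (j:ℕ) ∉ D ∧ rep D (i:ℕ) = rep D (j:ℕ) ∧
      f = X (i,0) * X (j,1) - X (i,1) * X (j,0))}

def OffD (α : (Fin (m+1) × Fin 2) →₀ ℕ) : Prop :=
  ∀ p : Fin (m+1) × Fin 2, ((p.1:ℕ) ∈ D) → α p = 0

def Srt (α : (Fin (m+1) × Fin 2) →₀ ℕ) : Prop :=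
  ∀ i j : Fin (m+1), (i:ℕ) < (j:ℕ) → rep D (i:ℕ) = rep D (j:ℕ) →
    α (i,1) = 0 ∨ α (j,0) = 0

def Nrm (α : (Fin (m+1) × Fin 2) →₀ ℕ) : Prop := OffD m D α ∧ Srt m D α

/-- exponent map on monomials induced by `phi` -/
def Emap (α : (Fin (m+1) × Fin 2) →₀ ℕ) : (ℕ ⊕ ℕ × Fin 2) →₀ ℕ :=
  ∑ p : Fin (m+1) × Fin 2,
    (Finsupp.single (Sum.inl ((p.1:ℕ))) (α p)
      + Finsupp.single (Sum.inr (rep D (p.1:ℕ), p.2)) (α p))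

variable {k m D}

lemma Emap_inl (α : (Fin (m+1) × Fin 2) →₀ ℕ) (i : Fin (m+1)) :
    Emap m D α (Sum.inl (i:ℕ)) = α (i,0) + α (i,1) := by
  classical
  rw [Emap, Finset.sum_apply']
  simp only [Finsupp.add_apply, Finsupp.single_apply]
  rw [Fintype.sum_prod_type]
  simp only [Sum.inl.injEq, reduceCtorEq, if_false, add_zero, Fin.val_inj]
  rw [Finset.sum_comm]
  simp only [Finset.sum_ite_eq', Finset.mem_univ, if_true]
  simp [Fin.sum_univ_two]

lemma Emap_inr (α : (Fin (m+1) × Fin 2) →₀ ℕ) (r : ℕ) (c : Fin 2) :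
    Emap m D α (Sum.inr (r, c)) = ∑ i : Fin (m+1), if rep D (i:ℕ) = r then α (i,c) else 0 := by
  classical
  rw [Emap, Finset.sum_apply']
  simp only [Finsupp.add_apply, Finsupp.single_apply]
  rw [Fintype.sum_prod_type]
  simp only [Sum.inr.injEq, reduceCtorEq, if_false, zero_add, Prod.mk.injEq]
  refine Finset.sum_congr rfl fun x _ => ?_
  by_cases h : rep D (x:ℕ) = r
  · simp [h, Finset.sum_ite_eq']
  · simp [h]

lemma prod_monomial_one {ι : Type*} (s : Finset ι) (g : ι → ((ℕ ⊕ ℕ × Fin 2) →₀ ℕ)) :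
    (∏ i ∈ s, (monomial (g i) (1:k))) = monomial (∑ i ∈ s, g i) 1 := by
  classical
  induction s using Finset.induction_on with
  | empty => simp
  | @insert a s hns ih =>
      rw [Finset.prod_insert hns, Finset.sum_insert hns, ih, monomial_mul, one_mul]

lemma phi_monomial (α : (Fin (m+1) × Fin 2) →₀ ℕ) (h : OffD m D α) :
    phi k m D (monomial α 1) = monomial (Emap m D α) 1 := by
  classical
  have hm : (monomial α (1:k)) = ∏ p : Fin (m+1) × Fin 2, (X p) ^ α p := by
    rw [monomial_eq, C_1, one_mul]
    exact Finsupp.prod_fintype _ _ (fun p => pow_zero (X p))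
  rw [hm, map_prod]
  have hfac : ∀ p : Fin (m+1) × Fin 2,
      phi k m D ((X p) ^ α p) = monomial
        ((Finsupp.single (Sum.inl ((p.1:ℕ))) (α p)
          + Finsupp.single (Sum.inr (rep D (p.1:ℕ), p.2)) (α p))) (1:k) := by
    intro p
    rw [map_pow, phi, aeval_X]
    by_cases hp : (p.1:ℕ) ∈ D
    · rw [if_pos hp, h p hp]
      simp
    · rw [if_neg hp, X, X, monomial_mul, monomial_pow]
      simp only [one_mul, one_pow]
      congr 1
      rw [smul_add, Finsupp.smul_single, Finsupp.smul_single, smul_eq_mul, mul_one]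
  simp only [hfac]
  rw [prod_monomial_one, Emap]


/-! ### Weight and normal form -/

def wt (m : ℕ) (α : (Fin (m+1) × Fin 2) →₀ ℕ) : ℕ :=
  ∑ i : Fin (m+1), α (i,1) * (m - (i:ℕ))

lemma wt_add (m : ℕ) (α β : (Fin (m+1) × Fin 2) →₀ ℕ) :
    wt m (α + β) = wt m α + wt m β := by
  simp [wt, Finsupp.add_apply, add_mul, Finset.sum_add_distrib]

lemma wt_single (m : ℕ) (j : Fin (m+1)) (c : Fin 2) :
    wt m (Finsupp.single (j,c) 1) = if c = 1 then m - (j:ℕ) else 0 := by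
  classical
  rw [wt]
  have : ∀ i : Fin (m+1), (Finsupp.single ((j,c) : Fin (m+1) × Fin 2) 1) (i,1) * (m - (i:ℕ))
      = if c = 1 ∧ i = j then m - (i:ℕ) else 0 := by
    intro i
    rw [Finsupp.single_apply]
    by_cases h : ((j,c) : Fin (m+1) × Fin 2) = (i,1)
    · rw [if_pos h]
      have h1 : j = i := congrArg Prod.fst h
      have h2 : c = 1 := congrArg Prod.snd h
      rw [if_pos ⟨h2, h1.symm⟩, one_mul]
    · rw [if_neg h, zero_mul, if_neg]
      rintro ⟨rfl, rfl⟩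
      exact h rfl
  simp only [this]
  by_cases hc : c = 1
  · simp only [hc, true_and, if_pos]
    rw [Finset.sum_ite_eq' Finset.univ j (fun i => m - (i:ℕ))]
    simp
  · simp [hc]

/-- span of normal monomials -/
def NormalSpan : Submodule k (MvPolynomial (Fin (m+1) × Fin 2) k) :=
  Submodule.span k (Set.range (fun a : {α // Nrm m D α} => (monomial a.1 1 : MvPolynomial (Fin (m+1) × Fin 2) k)))

lemma monomial_mem_sup (α : (Fin (m+1) × Fin 2) →₀ ℕ) :
    (monomial α (1:k)) ∈ (Qd k m D).restrictScalars k ⊔ (NormalSpan (k := k) (m := m) (D := D)) := by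
  classical
  suffices H : ∀ N (α : (Fin (m+1) × Fin 2) →₀ ℕ), wt m α = N →
      (monomial α (1:k)) ∈ (Qd k m D).restrictScalars k ⊔ (NormalSpan (k := k) (m := m) (D := D)) from
    H _ α rfl
  intro N
  induction N using Nat.strong_induction_on with
  | _ N IH =>
    intro α hN
    by_cases h1 : ∃ p : Fin (m+1) × Fin 2, (p.1:ℕ) ∈ D ∧ α p ≠ 0
    · obtain ⟨p, hp, hα⟩ := h1
      have hsub : α - Finsupp.single p 1 + Finsupp.single p 1 = α := by
        ext q
        simp only [Finsupp.add_apply, Finsupp.sub_apply, Finsupp.single_apply]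
        by_cases h : p = q
        · subst h; have : 1 ≤ α p := Nat.one_le_iff_ne_zero.mpr hα; simp; omega
        · simp [h]
      have hmon : monomial α (1:k) = monomial (α - Finsupp.single p 1) 1 * X p := by
        rw [X, monomial_mul, one_mul, hsub]
      rw [hmon]
      apply Submodule.mem_sup_left
      show _ ∈ Qd k m D
      exact Ideal.mul_mem_left _ _ (Ideal.subset_span (Or.inl ⟨p.1, hp, p.2, by rfl⟩))
    · push_neg at h1
      have hOff : OffD m D α := fun p hp => h1 p hp
      by_cases h2 : Srt m D α
      · exact Submodule.mem_sup_right (Submodule.subset_span ⟨⟨α, hOff, h2⟩, rfl⟩)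
      · rw [Srt] at h2
        push_neg at h2
        obtain ⟨i, j, hij, hrep, hi1, hj0⟩ := h2
        set β := α - Finsupp.single (i,1) 1 - Finsupp.single (j,0) 1 with hβdef
        have hne : ((i,1) : Fin (m+1) × Fin 2) ≠ (j,0) := by
          intro h
          simp only [Prod.mk.injEq] at h
          exact absurd h.2 (by decide)
        have hβ : β + Finsupp.single (i,1) 1 + Finsupp.single (j,0) 1 = α := by
          ext q
          simp only [hβdef, Finsupp.add_apply, Finsupp.tsub_apply, Finsupp.single_apply]
          by_cases hq1 : ((i,1) : Fin (m+1) × Fin 2) = q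
          · have hq2 : ¬ ((j,0) : Fin (m+1) × Fin 2) = q := fun h => hne (hq1.trans h.symm)
            have : 1 ≤ α (i,1) := Nat.one_le_iff_ne_zero.mpr hi1
            subst hq1
            simp only [if_pos rfl, if_neg hq2, if_true]
            omega
          · by_cases hq2 : ((j,0) : Fin (m+1) × Fin 2) = q
            · have : 1 ≤ α (j,0) := Nat.one_le_iff_ne_zero.mpr hj0
              subst hq2
              simp only [if_pos rfl, if_neg hq1, if_true]
              omega
            · simp [hq1, hq2]
        have expand : ∀ (a b : Fin (m+1) × Fin 2),
            monomial (β + Finsupp.single a 1 + Finsupp.single b 1) (1:k)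
              = monomial β 1 * X a * X b := by
          intro a b
          rw [X, X, monomial_mul, monomial_mul, one_mul, one_mul]
        have key : monomial α (1:k)
            = monomial (β + Finsupp.single (i,0) 1 + Finsupp.single (j,1) 1) 1
              - monomial β 1 * (X (i,0) * X (j,1) - X (i,1) * X (j,0)) := by
          rw [← hβ, expand, expand]
          ring
        rw [key]
        apply Submodule.sub_mem
        · have hwα : wt m α = wt m β + ((m - (i:ℕ)) + 0) := by
            rw [← hβ, wt_add, wt_add, wt_single, wt_single]
            simp
          have hwα' : wt m (β + Finsupp.single (i,0) 1 + Finsupp.single (j,1) 1)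
              = wt m β + (0 + (m - (j:ℕ))) := by
            rw [wt_add, wt_add, wt_single, wt_single]
            simp
          have hj_le : (j:ℕ) ≤ m := Nat.lt_succ_iff.mp j.isLt
          have hlt : wt m (β + Finsupp.single (i,0) 1 + Finsupp.single (j,1) 1) < N := by
            rw [hwα', ← hN, hwα]
            have : m - (j:ℕ) < m - (i:ℕ) := Nat.sub_lt_sub_left (by omega) hij
            omega
          exact IH _ hlt _ rfl
        · apply Submodule.mem_sup_left
          show _ ∈ Qd k m D
          refine Ideal.mul_mem_left _ _ (Ideal.subset_span (Or.inr ⟨i, j, ?_, ?_, hrep, rfl⟩))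
          · intro hiD; exact hi1 (hOff (i,1) hiD)
          · intro hjD; exact hj0 (hOff (j,0) hjD)

lemma mem_sup_all (f : MvPolynomial (Fin (m+1) × Fin 2) k) :
    f ∈ (Qd k m D).restrictScalars k ⊔ (NormalSpan (k := k) (m := m) (D := D)) := by
  rw [← support_sum_monomial_coeff f]
  apply Submodule.sum_mem
  intro α _
  have : monomial α (coeff α f) = (coeff α f) • monomial α (1:k) := by
    rw [smul_monomial, smul_eq_mul, mul_one]
  rw [this]
  exact Submodule.smul_mem _ _ (monomial_mem_sup α)

/-! ### Injectivity of `Emap` on normal exponents -/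

lemma sum_split (i₀ : Fin (m+1)) (g : Fin (m+1) → ℕ) :
    ∑ j : Fin (m+1), g j = (∑ j ∈ Finset.univ.filter (· < i₀), g j) + g i₀
      + ∑ j ∈ Finset.univ.filter (fun j => i₀ < j), g j := by
  classical
  have h1 := Finset.sum_filter_add_sum_filter_not Finset.univ (· < i₀) g
  have h2 : Finset.univ.filter (fun j : Fin (m+1) => ¬ j < i₀)
      = insert i₀ (Finset.univ.filter (fun j => i₀ < j)) := by
    ext x
    simp only [Finset.mem_filter, Finset.mem_univ, true_and, Finset.mem_insert, Fin.lt_def]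
    rw [Fin.ext_iff]
    omega
  rw [h2, Finset.sum_insert (by simp)] at h1
  omega

lemma emap_aux {α β : (Fin (m+1) × Fin 2) →₀ ℕ} (hβ : Srt m D β)
    (hc : ∀ i : Fin (m+1), α (i,0) + α (i,1) = β (i,0) + β (i,1))
    (hp : ∀ r, (∑ i : Fin (m+1), if rep D (i:ℕ) = r then α (i,0) else 0)
      = ∑ i : Fin (m+1), if rep D (i:ℕ) = r then β (i,0) else 0)
    (i₀ : Fin (m+1)) (hmin : ∀ j : Fin (m+1), j < i₀ → α (j,0) = β (j,0))
    (hgt : β (i₀,0) < α (i₀,0)) : False := by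
  classical
  have h := hp (rep D (i₀:ℕ))
  rw [sum_split i₀, sum_split i₀] at h
  have hpre : (∑ j ∈ Finset.univ.filter (· < i₀),
        if rep D (j:ℕ) = rep D (i₀:ℕ) then α (j,0) else 0)
      = ∑ j ∈ Finset.univ.filter (· < i₀),
        if rep D (j:ℕ) = rep D (i₀:ℕ) then β (j,0) else 0 := by
    refine Finset.sum_congr rfl fun j hj => ?_
    rw [hmin j (Finset.mem_filter.mp hj).2]
  rw [hpre, if_pos rfl, if_pos rfl] at h
  have htail : (∑ j ∈ Finset.univ.filter (fun j => i₀ < j),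
      if rep D (j:ℕ) = rep D (i₀:ℕ) then β (j,0) else 0) ≠ 0 := by
    intro h0
    rw [h0] at h
    have : (∑ j ∈ Finset.univ.filter (fun j => i₀ < j),
        if rep D (j:ℕ) = rep D (i₀:ℕ) then α (j,0) else 0) = 0 →
        False := by omega
    exact this (by omega)
  obtain ⟨j, hjmem, hjne⟩ := Finset.exists_ne_zero_of_sum_ne_zero htail
  have hjgt : i₀ < j := (Finset.mem_filter.mp hjmem).2
  by_cases hrj : rep D (j:ℕ) = rep D (i₀:ℕ)
  · rw [if_pos hrj] at hjne
    rcases hβ i₀ j hjgt hrj.symm with h1 | h1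
    · have := hc i₀
      omega
    · exact hjne h1
  · rw [if_neg hrj] at hjne
    exact hjne rfl

lemma emap_injOn {α β : (Fin (m+1) × Fin 2) →₀ ℕ} (hα : Nrm m D α) (hβ : Nrm m D β)
    (h : Emap m D α = Emap m D β) : α = β := by
  classical
  have hc : ∀ i : Fin (m+1), α (i,0) + α (i,1) = β (i,0) + β (i,1) := by
    intro i
    have := congrArg (fun f : (ℕ ⊕ ℕ × Fin 2) →₀ ℕ => f (Sum.inl (i:ℕ))) h
    simpa only [Emap_inl] using this
  have hp : ∀ r, (∑ i : Fin (m+1), if rep D (i:ℕ) = r then α (i,0) else 0)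
      = ∑ i : Fin (m+1), if rep D (i:ℕ) = r then β (i,0) else 0 := by
    intro r
    have := congrArg (fun f : (ℕ ⊕ ℕ × Fin 2) →₀ ℕ => f (Sum.inr (r, 0))) h
    simpa only [Emap_inr] using this
  have h0 : ∀ i : Fin (m+1), α (i,0) = β (i,0) := by
    by_contra hne
    push_neg at hne
    obtain ⟨i1, hi1⟩ := hne
    have hnonempty : (Finset.univ.filter (fun i : Fin (m+1) => α (i,0) ≠ β (i,0))).Nonempty :=
      ⟨i1, Finset.mem_filter.mpr ⟨Finset.mem_univ _, hi1⟩⟩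
    set i₀ := (Finset.univ.filter (fun i : Fin (m+1) => α (i,0) ≠ β (i,0))).min' hnonempty with hi₀def
    have hspec : α (i₀,0) ≠ β (i₀,0) :=
      (Finset.mem_filter.mp ((Finset.univ.filter _).min'_mem hnonempty)).2
    have hmin : ∀ j : Fin (m+1), j < i₀ → α (j,0) = β (j,0) := by
      intro j hj
      by_contra hne2
      exact absurd (Finset.min'_le _ j (Finset.mem_filter.mpr ⟨Finset.mem_univ _, hne2⟩))
        (not_le.mpr hj)
    rcases lt_or_gt_of_ne hspec with hlt | hgt
    · exact emap_aux hα.2 (fun i => (hc i).symm) (fun r => (hp r).symm) i₀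
        (fun j hj => (hmin j hj).symm) hlt
    · exact emap_aux hβ.2 hc hp i₀ hmin hgt
  ext p
  obtain ⟨i, c⟩ := p
  have hcc : c = 0 ∨ c = 1 := by omega
  rcases hcc with rfl | rfl
  · exact h0 i
  · have h1 := hc i
    have h2 := h0 i
    omega

/-! ### `Qd = ker phi` -/

lemma Qd_le_ker : Qd k m D ≤ RingHom.ker (phi k m D).toRingHom := by
  rw [Qd, Ideal.span_le]
  rintro f (⟨d, hd, c, rfl⟩ | ⟨i, j, hi, hj, hrep, rfl⟩) <;>
    simp only [SetLike.mem_coe, RingHom.mem_ker, AlgHom.toRingHom_eq_coe, RingHom.coe_coe]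
  · rw [phi, aeval_X, if_pos hd]
  · simp only [map_sub, map_mul, phi, aeval_X, if_neg hi, if_neg hj, hrep]
    ring

lemma ker_le_Qd : RingHom.ker (phi k m D).toRingHom ≤ Qd k m D := by
  classical
  intro f hf
  obtain ⟨q, hq, s, hs, hqs⟩ := Submodule.mem_sup.mp
    (mem_sup_all (k := k) (m := m) (D := D) f)
  have hker : phi k m D s = 0 := by
    have hfq : phi k m D f = 0 := hf
    have hq0 : phi k m D q = 0 := Qd_le_ker hq
    have : f = q + s := hqs.symm
    rw [this, map_add, hq0, zero_add] at hfq
    exact hfq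
  -- write s as a finsupp combination of normal monomials
  rw [NormalSpan, Finsupp.mem_span_range_iff_exists_finsupp] at hs
  obtain ⟨c, hc⟩ := hs
  have himg : (c.sum fun a r => r • (monomial (Emap m D a.1) (1:k))) = 0 := by
    rw [← hker, ← hc, map_finsuppSum, Finsupp.sum]
    refine Finset.sum_congr rfl fun a _ => ?_
    show c a • (monomial (Emap m D a.1) (1:k)) = phi k m D (c a • monomial a.1 1)
    rw [map_smul, phi_monomial _ a.2.1]
  have hli : LinearIndependent k
      (fun a : {α : (Fin (m+1) × Fin 2) →₀ ℕ // Nrm m D α} =>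
        (monomial (Emap m D a.1) (1:k) : MvPolynomial (ℕ ⊕ ℕ × Fin 2) k)) := by
    have hinj : Function.Injective
        (fun a : {α : (Fin (m+1) × Fin 2) →₀ ℕ // Nrm m D α} => Emap m D a.1) := by
      intro a b hab
      exact Subtype.ext (emap_injOn a.2 b.2 hab)
    have := (MvPolynomial.basisMonomials (ℕ ⊕ ℕ × Fin 2) k).linearIndependent.comp _ hinj
    simpa only [coe_basisMonomials, Function.comp_def] using this
  have hc0 : c = 0 := by
    rw [linearIndependent_iff] at hli
    exact hli c (by rw [Finsupp.linearCombination_apply]; exact himg)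
  have hs0 : s = 0 := by rw [← hc, hc0, Finsupp.sum_zero_index]
  have : f = q := by rw [← hqs, hs0, add_zero]
  rw [this]
  exact hq

/-! ### `Qd` is prime -/

lemma Qd_eq_ker : Qd k m D = RingHom.ker (phi k m D).toRingHom :=
  le_antisymm Qd_le_ker ker_le_Qd

lemma Qd_prime : (Qd k m D).IsPrime := by
  rw [Qd_eq_ker]
  exact RingHom.ker_isPrime _

/-! ### the adjacent minors ideal is contained in every `Qd` -/

lemma adj_le_Qd : adjacentMinorsIdeal k m ≤ Qd k m D := by
  rw [adjacentMinorsIdeal, Ideal.span_le]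
  rintro f ⟨i, rfl⟩
  have hval : (i.castSucc : ℕ) = (i : ℕ) := rfl
  have hval2 : (i.succ : ℕ) = (i : ℕ) + 1 := rfl
  by_cases h1 : ((i.castSucc : Fin (m+1)) : ℕ) ∈ D
  · have g0 : (X (i.castSucc, 0) : MvPolynomial (Fin (m+1) × Fin 2) k) ∈ Qd k m D :=
      Ideal.subset_span (Or.inl ⟨i.castSucc, h1, 0, rfl⟩)
    have g1 : (X (i.castSucc, 1) : MvPolynomial (Fin (m+1) × Fin 2) k) ∈ Qd k m D :=
      Ideal.subset_span (Or.inl ⟨i.castSucc, h1, 1, rfl⟩)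
    have : (X (i.castSucc, 0) * X (i.succ, 1) - X (i.castSucc, 1) * X (i.succ, 0)
        : MvPolynomial (Fin (m+1) × Fin 2) k)
        = X (i.succ, 1) * X (i.castSucc, 0) - X (i.succ, 0) * X (i.castSucc, 1) := by ring
    rw [this]
    exact Submodule.sub_mem _ (Ideal.mul_mem_left _ _ g0) (Ideal.mul_mem_left _ _ g1)
  · by_cases h2 : ((i.succ : Fin (m+1)) : ℕ) ∈ D
    · have g0 : (X (i.succ, 0) : MvPolynomial (Fin (m+1) × Fin 2) k) ∈ Qd k m D :=
        Ideal.subset_span (Or.inl ⟨i.succ, h2, 0, rfl⟩)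
      have g1 : (X (i.succ, 1) : MvPolynomial (Fin (m+1) × Fin 2) k) ∈ Qd k m D :=
        Ideal.subset_span (Or.inl ⟨i.succ, h2, 1, rfl⟩)
      exact Submodule.sub_mem _ (Ideal.mul_mem_left _ _ g1) (Ideal.mul_mem_left _ _ g0)
    · refine Ideal.subset_span (Or.inr ⟨i.castSucc, i.succ, h1, h2, ?_, rfl⟩)
      rw [hval, hval2, rep, if_neg (hval ▸ h1)]

/-! ### every prime over the adjacent minors contains some `Qd` -/

variable (P : Ideal (MvPolynomial (Fin (m+1) × Fin 2) k))

open Classical in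
/-- the columns contained in a prime `P` -/
def D0 : Finset ℕ :=
  Finset.image Fin.val (Finset.univ.filter
    (fun i : Fin (m+1) => X (i,0) ∈ P ∧ X (i,1) ∈ P))

open Classical in
lemma mem_D0 (i : Fin (m+1)) : (i:ℕ) ∈ D0 P ↔ (X (i,0) ∈ P ∧ X (i,1) ∈ P) := by
  rw [D0, Finset.mem_image]
  constructor
  · rintro ⟨a, ha, hval⟩
    have : a = i := Fin.ext hval
    subst this
    exact (Finset.mem_filter.mp ha).2
  · intro h
    exact ⟨i, Finset.mem_filter.mpr ⟨Finset.mem_univ _, h⟩, rfl⟩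

lemma D0_le (d : ℕ) (hd : d ∈ D0 P) : d ≤ m := by
  rw [D0, Finset.mem_image] at hd
  obtain ⟨a, _, rfl⟩ := hd
  omega

variable {P}

lemma plucker (hP : P.IsPrime) (hIP : adjacentMinorsIdeal k m ≤ P) :
    ∀ n, ∀ i j : Fin (m+1), (j:ℕ) - (i:ℕ) = n → (i:ℕ) ≤ (j:ℕ) →
    (i:ℕ) ∉ D0 P → (j:ℕ) ∉ D0 P →
    rep (D0 P) (i:ℕ) = rep (D0 P) (j:ℕ) →
    X (i,0) * X (j,1) - X (i,1) * X (j,0) ∈ P := by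
  intro n
  induction n using Nat.strong_induction_on with
  | _ n IH =>
    intro i j hn hij hi hj hrep
    match n, hn with
    | 0, hn =>
      have : j = i := Fin.ext (by omega)
      subst this
      have hz : (X (j,0) * X (j,1) - X (j,1) * X (j,0) : MvPolynomial (Fin (m+1) × Fin 2) k)
          = 0 := by ring
      rw [hz]
      exact Submodule.zero_mem _
    | 1, hn =>
      have him : (i:ℕ) < m := by have := j.isLt; omega
      have hc : (⟨(i:ℕ), him⟩ : Fin m).castSucc = i := Fin.ext rfl
      have hs : (⟨(i:ℕ), him⟩ : Fin m).succ = j := Fin.ext (by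
        simp only [Fin.val_succ]
        omega)
      refine hIP (Ideal.subset_span ⟨⟨(i:ℕ), him⟩, ?_⟩)
      rw [hc, hs]
    | (t+2), hn =>
      have hjm : (j:ℕ) ≤ m := Nat.lt_succ_iff.mp j.isLt
      set kn : ℕ := (j:ℕ) - 1 with hkn
      have hik : (i:ℕ) < kn := by omega
      have hkj : kn < (j:ℕ) := by omega
      set kf : Fin (m+1) := ⟨kn, by omega⟩ with hkf
      have hkD : kn ∉ D0 P := by
        apply rep_interval (D0 P) (j:ℕ) kn _ hkj
        have := rep_le (D0 P) (i:ℕ)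
        omega
      have hrep_kj : rep (D0 P) kn = rep (D0 P) (j:ℕ) := by
        rw [rep_eq_of (D0 P) kn (j:ℕ) (le_of_lt hkj)]
        intro t ht1 ht2
        have : t = kn := by omega
        subst this
        exact hkD
      have hrep_ik : rep (D0 P) (i:ℕ) = rep (D0 P) kn := by rw [hrep, hrep_kj]
      have hkv : ((kf : Fin (m+1)) : ℕ) = kn := rfl
      have hΔik : X (i,0) * X (kf,1) - X (i,1) * X (kf,0) ∈ P :=
        IH (t+1) (by omega) i kf (by rw [hkv]; omega) (by rw [hkv]; omega) hi
          (by rw [hkv]; exact hkD) (by rw [hkv]; exact hrep_ik)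
      have hΔkj : X (kf,0) * X (j,1) - X (kf,1) * X (j,0) ∈ P :=
        IH 1 (by omega) kf j (by rw [hkv]; omega) (by rw [hkv]; omega)
          (by rw [hkv]; exact hkD) hj (by rw [hkv]; exact hrep_kj)
      have idA : (X (kf,0) : MvPolynomial (Fin (m+1) × Fin 2) k) * (X (i,0) * X (j,1) - X (i,1) * X (j,0))
          = X (j,0) * (X (i,0) * X (kf,1) - X (i,1) * X (kf,0))
            + X (i,0) * (X (kf,0) * X (j,1) - X (kf,1) * X (j,0)) := by ring
      have idB : (X (kf,1) : MvPolynomial (Fin (m+1) × Fin 2) k) * (X (i,0) * X (j,1) - X (i,1) * X (j,0))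
          = X (j,1) * (X (i,0) * X (kf,1) - X (i,1) * X (kf,0))
            + X (i,1) * (X (kf,0) * X (j,1) - X (kf,1) * X (j,0)) := by ring
      have hA : X (kf,0) * (X (i,0) * X (j,1) - X (i,1) * X (j,0)) ∈ P := by
        rw [idA]
        exact Submodule.add_mem _ (Ideal.mul_mem_left _ _ hΔik) (Ideal.mul_mem_left _ _ hΔkj)
      have hB : X (kf,1) * (X (i,0) * X (j,1) - X (i,1) * X (j,0)) ∈ P := by
        rw [idB]
        exact Submodule.add_mem _ (Ideal.mul_mem_left _ _ hΔik) (Ideal.mul_mem_left _ _ hΔkj)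
      have hnot : ¬ (X (kf,0) ∈ P ∧ X (kf,1) ∈ P) := by
        rw [← mem_D0 P kf]
        exact hkD
      rcases hP.mem_or_mem hA with h | h
      · rcases hP.mem_or_mem hB with h' | h'
        · exact absurd ⟨h, h'⟩ hnot
        · exact h'
      · exact h

lemma QD0_le (hP : P.IsPrime) (hIP : adjacentMinorsIdeal k m ≤ P) :
    Qd k m (D0 P) ≤ P := by
  rw [Qd, Ideal.span_le]
  rintro f (⟨d, hd, c, rfl⟩ | ⟨i, j, hi, hj, hrep, rfl⟩)
  · have := (mem_D0 P d).mp hd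
    have hcc : c = 0 ∨ c = 1 := by omega
    rcases hcc with rfl | rfl
    · exact this.1
    · exact this.2
  · rcases le_total (i:ℕ) (j:ℕ) with hle | hle
    · exact plucker hP hIP _ i j rfl hle hi hj hrep
    · have := plucker hP hIP _ j i rfl hle hj hi hrep.symm
      have hneg : (X (i,0) * X (j,1) - X (i,1) * X (j,0) : MvPolynomial (Fin (m+1) × Fin 2) k)
          = -(X (j,0) * X (i,1) - X (j,1) * X (i,0)) := by ring
      rw [hneg]
      exact Submodule.neg_mem _ this

/-! ### shrinking a cut set to a sparse one -/

lemma Qd_erase_le (D : Finset ℕ) (e : ℕ) (he : e ∈ D)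
    (hcond : e = 0 ∨ e = m ∨ (e + 1 ∈ D) ∨ (1 ≤ e ∧ e - 1 ∈ D)) :
    Qd k m (D.erase e) ≤ Qd k m D := by
  rw [Qd, Ideal.span_le]
  rintro f (⟨d, hd, c, rfl⟩ | ⟨i, j, hi, hj, hrep, rfl⟩)
  · exact Ideal.subset_span (Or.inl ⟨d, Finset.mem_of_mem_erase hd, c, rfl⟩)
  · by_cases hiD : (i:ℕ) ∈ D
    · have g0 : (X (i, (0 : Fin 2)) : MvPolynomial (Fin (m+1) × Fin 2) k) ∈ Qd k m D :=
        Ideal.subset_span (Or.inl ⟨i, hiD, 0, rfl⟩)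
      have g1 : (X (i, (1 : Fin 2)) : MvPolynomial (Fin (m+1) × Fin 2) k) ∈ Qd k m D :=
        Ideal.subset_span (Or.inl ⟨i, hiD, 1, rfl⟩)
      have : (X (i,0) * X (j,1) - X (i,1) * X (j,0) : MvPolynomial (Fin (m+1) × Fin 2) k)
          = X (j,1) * X (i,0) - X (j,0) * X (i,1) := by ring
      rw [this]
      exact Submodule.sub_mem _ (Ideal.mul_mem_left _ _ g0) (Ideal.mul_mem_left _ _ g1)
    · by_cases hjD : (j:ℕ) ∈ D
      · have g0 : (X (j, (0 : Fin 2)) : MvPolynomial (Fin (m+1) × Fin 2) k) ∈ Qd k m D :=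
          Ideal.subset_span (Or.inl ⟨j, hjD, 0, rfl⟩)
        have g1 : (X (j, (1 : Fin 2)) : MvPolynomial (Fin (m+1) × Fin 2) k) ∈ Qd k m D :=
          Ideal.subset_span (Or.inl ⟨j, hjD, 1, rfl⟩)
        have : (X (i,0) * X (j,1) - X (i,1) * X (j,0) : MvPolynomial (Fin (m+1) × Fin 2) k)
            = X (i,0) * X (j,1) - X (i,1) * X (j,0) := rfl
        exact Submodule.sub_mem _ (Ideal.mul_mem_left _ _ g1) (Ideal.mul_mem_left _ _ g0)
      · have aux : ∀ a b : Fin (m+1), (a:ℕ) ≤ (b:ℕ) → (a:ℕ) ∉ D → (b:ℕ) ∉ D →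
            rep (D.erase e) (a:ℕ) = rep (D.erase e) (b:ℕ) →
            rep D (a:ℕ) = rep D (b:ℕ) := by
          intro a b hab haD hbD hrep'
          rw [rep_eq_of D (a:ℕ) (b:ℕ) hab]
          intro t ht1 ht2
          have htE : t ∉ D.erase e := by
            apply rep_interval (D.erase e) (b:ℕ) t _ ht2
            have := rep_le (D.erase e) (a:ℕ)
            omega
          intro htD
          have hte : t = e := by
            by_contra hne
            exact htE (Finset.mem_erase.mpr ⟨hne, htD⟩)
          have hti : (a:ℕ) < t := by
            rcases Nat.lt_or_ge (a:ℕ) t with hx | hx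
            · exact hx
            · exfalso
              apply haD
              have hta : (a:ℕ) = t := by omega
              rw [hta]
              exact htD
          have hbm : (b:ℕ) ≤ m := Nat.lt_succ_iff.mp b.isLt
          rcases hcond with h | h | h | h
          · omega
          · omega
          · have ht1j : t + 1 ≤ (b:ℕ) := by omega
            rcases lt_or_eq_of_le ht1j with hlt | heq
            · refine (rep_interval (D.erase e) (b:ℕ) (t+1) ?_ hlt)
                (Finset.mem_erase.mpr ⟨by omega, by rw [hte]; exact h⟩)
              have := rep_le (D.erase e) (a:ℕ)
              omega
            · exact hbD (by rw [← heq, hte]; exact h)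
          · refine (rep_interval (D.erase e) (b:ℕ) (t-1) ?_ (by omega))
              (Finset.mem_erase.mpr ⟨by omega, by rw [hte]; exact h.2⟩)
            have := rep_le (D.erase e) (a:ℕ)
            omega
        have hrepD : rep D (i:ℕ) = rep D (j:ℕ) := by
          rcases le_total (i:ℕ) (j:ℕ) with hle | hle
          · exact aux i j hle hiD hjD hrep
          · exact (aux j i hle hjD hiD hrep.symm).symm
        exact Ideal.subset_span (Or.inr ⟨i, j, hiD, hjD, hrepD, rfl⟩)

lemma exists_sparse_le : ∀ N (D : Finset ℕ), D.card ≤ N → (∀ d ∈ D, d ≤ m) →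
    ∃ D', Sparse m D' ∧ Qd k m D' ≤ Qd k m D := by
  intro N
  induction N with
  | zero =>
    intro D hcard _
    have : D = ∅ := Finset.card_eq_zero.mp (Nat.le_zero.mp hcard)
    subst this
    exact ⟨∅, fun d hd => absurd hd (Finset.notMem_empty d), le_rfl⟩
  | succ N IH =>
    intro D hcard hDm
    by_cases hs : Sparse m D
    · exact ⟨D, hs, le_rfl⟩
    · rw [Sparse] at hs
      push_neg at hs
      obtain ⟨d, hd, hbad⟩ := hs
      have hdm : d ≤ m := hDm d hd
      -- choose an element e to erase
      have step : ∃ e ∈ D, (e = 0 ∨ e = m ∨ (e + 1 ∈ D) ∨ (1 ≤ e ∧ e - 1 ∈ D)) := by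
        by_cases h1 : 1 ≤ d
        · by_cases h2 : d + 1 ≤ m
          · have h3 : d + 1 ∈ D := hbad h1 h2
            exact ⟨d + 1, h3, Or.inr (Or.inr (Or.inr ⟨by omega, by simpa using hd⟩))⟩
          · exact ⟨d, hd, Or.inr (Or.inl (by omega))⟩
        · exact ⟨d, hd, Or.inl (by omega)⟩
      obtain ⟨e, he, hecond⟩ := step
      have hcard' : (D.erase e).card ≤ N := by
        have := Finset.card_erase_of_mem he
        have hpos : 1 ≤ D.card := Finset.card_pos.mpr ⟨e, he⟩
        omega
      obtain ⟨D', hD', hle⟩ := IH (D.erase e) hcard'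
        (fun x hx => hDm x (Finset.mem_of_mem_erase hx))
      exact ⟨D', hD', hle.trans (Qd_erase_le D e he hecond)⟩


/-! ### nonvanishing of `phi` on key elements -/

lemma phi_X_ne (i : Fin (m+1)) (hi : (i:ℕ) ∉ D) (c : Fin 2) :
    phi k m D (X (i,c)) ≠ 0 := by
  rw [phi, aeval_X, if_neg hi]
  exact mul_ne_zero (X_ne_zero _) (X_ne_zero _)

lemma sum_ite_rep (r : ℕ) (i : Fin (m+1)) :
    (∑ x : Fin (m+1), if rep D (x:ℕ) = r then (if x = i then 1 else 0) else 0)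
      = if rep D (i:ℕ) = r then 1 else 0 := by
  classical
  have hterm : ∀ x : Fin (m+1),
      (if rep D (x:ℕ) = r then (if x = i then 1 else 0) else 0)
        = if x = i then (if rep D (i:ℕ) = r then 1 else 0) else 0 := by
    intro x
    by_cases hx : x = i
    · subst hx; simp
    · simp [hx]
  rw [Finset.sum_congr rfl (fun x _ => hterm x), Finset.sum_ite_eq' Finset.univ i]
  simp

lemma X_mul_X_eq_monomial (p q : Fin (m+1) × Fin 2) :
    (X p * X q : MvPolynomial (Fin (m+1) × Fin 2) k)
      = monomial (Finsupp.single p 1 + Finsupp.single q 1) 1 := by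
  rw [X, X, monomial_mul, one_mul]

lemma phi_minor_ne (i j : Fin (m+1)) (hi : (i:ℕ) ∉ D) (hj : (j:ℕ) ∉ D)
    (hrep : rep D (i:ℕ) ≠ rep D (j:ℕ)) :
    phi k m D (X (i,0) * X (j,1) - X (i,1) * X (j,0)) ≠ 0 := by
  classical
  set α1 : (Fin (m+1) × Fin 2) →₀ ℕ :=
    Finsupp.single ((i,0) : Fin (m+1) × Fin 2) 1 + Finsupp.single ((j,1) : Fin (m+1) × Fin 2) 1
    with hα1
  set α2 : (Fin (m+1) × Fin 2) →₀ ℕ :=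
    Finsupp.single ((i,1) : Fin (m+1) × Fin 2) 1 + Finsupp.single ((j,0) : Fin (m+1) × Fin 2) 1
    with hα2
  have hOff1 : OffD m D α1 := by
    intro p hp
    have h1 : ((i,(0:Fin 2)) : Fin (m+1) × Fin 2) ≠ p := by
      intro h; rw [← h] at hp; exact hi hp
    have h2 : ((j,(1:Fin 2)) : Fin (m+1) × Fin 2) ≠ p := by
      intro h; rw [← h] at hp; exact hj hp
    rw [hα1, Finsupp.add_apply, Finsupp.single_apply, Finsupp.single_apply,
      if_neg h1, if_neg h2]
    rfl
  have hOff2 : OffD m D α2 := by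
    intro p hp
    have h1 : ((i,(1:Fin 2)) : Fin (m+1) × Fin 2) ≠ p := by
      intro h; rw [← h] at hp; exact hi hp
    have h2 : ((j,(0:Fin 2)) : Fin (m+1) × Fin 2) ≠ p := by
      intro h; rw [← h] at hp; exact hj hp
    rw [hα2, Finsupp.add_apply, Finsupp.single_apply, Finsupp.single_apply,
      if_neg h1, if_neg h2]
    rfl
  have hφ : phi k m D (X (i,0) * X (j,1) - X (i,1) * X (j,0))
      = monomial (Emap m D α1) 1 - monomial (Emap m D α2) 1 := by
    rw [map_sub, X_mul_X_eq_monomial, X_mul_X_eq_monomial,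
      phi_monomial _ hOff1, phi_monomial _ hOff2]
  rw [hφ]
  intro h0
  have hmono := sub_eq_zero.mp h0
  have hE : Emap m D α1 = Emap m D α2 := by
    rcases (monomial_eq_monomial_iff _ _ _ _).mp hmono with h | h
    · exact h.1
    · exact absurd h.1 one_ne_zero
  have hα1v : ∀ x : Fin (m+1), α1 (x,0) = if x = i then 1 else 0 := by
    intro x
    have h2 : ((j,(1:Fin 2)) : Fin (m+1) × Fin 2) ≠ (x,0) := by
      intro h
      simp only [Prod.mk.injEq] at h
      exact absurd h.2 (by decide)
    rw [hα1, Finsupp.add_apply, Finsupp.single_apply, Finsupp.single_apply, if_neg h2, add_zero]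
    by_cases hx : x = i
    · subst hx; simp
    · rw [if_neg (fun h => hx (congrArg Prod.fst h).symm), if_neg hx]
  have hα2v : ∀ x : Fin (m+1), α2 (x,0) = if x = j then 1 else 0 := by
    intro x
    have h2 : ((i,(1:Fin 2)) : Fin (m+1) × Fin 2) ≠ (x,0) := by
      intro h
      simp only [Prod.mk.injEq] at h
      exact absurd h.2 (by decide)
    rw [hα2, Finsupp.add_apply, Finsupp.single_apply, Finsupp.single_apply, if_neg h2, zero_add]
    by_cases hx : x = j
    · subst hx; simp
    · rw [if_neg (fun h => hx (congrArg Prod.fst h).symm), if_neg hx]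
  have hcoeff := congrArg (fun f : (ℕ ⊕ ℕ × Fin 2) →₀ ℕ => f (Sum.inr (rep D (i:ℕ), 0))) hE
  simp only [Emap_inr] at hcoeff
  simp only [hα1v, hα2v] at hcoeff
  rw [sum_ite_rep, sum_ite_rep, if_pos rfl, if_neg (fun h => hrep h.symm)] at hcoeff
  exact Nat.one_ne_zero hcoeff

/-! ### sparse cut sets give incomparable ideals -/

lemma sparse_injective {D1 D2 : Finset ℕ} (h1 : Sparse m D1) (h2 : Sparse m D2)
    (hle : Qd k m D1 ≤ Qd k m D2) : D1 = D2 := by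
  have hsub : D1 ⊆ D2 := by
    intro d hd
    have hdm : d + 1 ≤ m := (h1 d hd).2.1
    set df : Fin (m+1) := ⟨d, by omega⟩ with hdf
    have hmem : (X (df,(0:Fin 2)) : MvPolynomial (Fin (m+1) × Fin 2) k) ∈ Qd k m D2 :=
      hle (Ideal.subset_span (Or.inl ⟨df, hd, 0, rfl⟩))
    by_contra hnd
    have hker := Qd_le_ker (D := D2) hmem
    rw [RingHom.mem_ker] at hker
    exact phi_X_ne (D := D2) df hnd 0 hker
  refine Finset.Subset.antisymm hsub (fun d hd => ?_)
  by_contra hnd1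
  obtain ⟨hd1, hd2, hd3⟩ := h2 d hd
  set iF : Fin (m+1) := ⟨d-1, by omega⟩ with hiF
  set jF : Fin (m+1) := ⟨d+1, by omega⟩ with hjF
  have hiv : ((iF : Fin (m+1)) : ℕ) = d - 1 := rfl
  have hjv : ((jF : Fin (m+1)) : ℕ) = d + 1 := rfl
  have hi1 : d - 1 ∉ D1 := by
    intro h
    have h' := hsub h
    have := (h2 _ h').2.2
    rw [show d - 1 + 1 = d by omega] at this
    exact this hd
  have hj1 : d + 1 ∉ D1 := fun h => hd3 (hsub h)
  have hrep1 : rep D1 (d-1) = rep D1 (d+1) := by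
    rw [rep_eq_of D1 (d-1) (d+1) (by omega)]
    intro t ht1 ht2
    have : t = d - 1 ∨ t = d := by omega
    rcases this with rfl | rfl
    · exact hi1
    · exact hnd1
  have hmem : (X (iF,0) * X (jF,1) - X (iF,1) * X (jF,0)
      : MvPolynomial (Fin (m+1) × Fin 2) k) ∈ Qd k m D2 :=
    hle (Ideal.subset_span (Or.inr ⟨iF, jF,
      (by rw [hiv]; exact hi1), (by rw [hjv]; exact hj1),
      (by rw [hiv, hjv]; exact hrep1.symm.symm), rfl⟩))
  have hker := Qd_le_ker (D := D2) hmem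
  rw [RingHom.mem_ker] at hker
  have hi2 : d - 1 ∉ D2 := by
    intro h
    have := (h2 _ h).2.2
    rw [show d - 1 + 1 = d by omega] at this
    exact this hd
  refine phi_minor_ne (D := D2) iF jF (by rw [hiv]; exact hi2) (by rw [hjv]; exact hd3)
    ?_ hker
  rw [hiv, hjv]
  exact rep_ne_of_sep D2 (d-1) d (d+1) hd (by omega) (by omega)

/-! ### main characterization of the minimal primes -/

lemma minimalPrimes_eq :
    Ideal.minimalPrimes (adjacentMinorsIdeal k m)
      = (fun D => Qd k m D) '' {D | Sparse m D} := by
  ext J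
  constructor
  · intro hJ
    have hprime : J.IsPrime := hJ.1.1
    have hIJ : adjacentMinorsIdeal k m ≤ J := hJ.1.2
    obtain ⟨D', hsp, hle⟩ := exists_sparse_le (k := k) (D0 J).card (D0 J) le_rfl (D0_le J)
    have h1 : Qd k m D' ≤ J := hle.trans (QD0_le hprime hIJ)
    have h2 : J ≤ Qd k m D' := hJ.2 ⟨Qd_prime, adj_le_Qd⟩ h1
    exact ⟨D', hsp, le_antisymm h1 h2⟩
  · rintro ⟨D1, hsp, rfl⟩
    refine ⟨⟨Qd_prime, adj_le_Qd⟩, ?_⟩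
    rintro J' ⟨hJp, hIJ'⟩ hJle
    obtain ⟨D'', hsp'', hle''⟩ := exists_sparse_le (k := k) (D0 J').card (D0 J') le_rfl (D0_le J')
    have hQJ : Qd k m D'' ≤ J' := hle''.trans (QD0_le hJp hIJ')
    have hDD : D'' = D1 := sparse_injective hsp'' hsp (hQJ.trans hJle)
    rw [← hDD]
    exact hQJ

theorem main : (Ideal.minimalPrimes (adjacentMinorsIdeal k m)).ncard = Nat.fib (m+1) := by
  have hinj : Set.InjOn (fun D => Qd k m D) {D | Sparse m D} := fun D1 h1 D2 h2 he =>
    sparse_injective h1 h2 (le_of_eq he)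
  rw [minimalPrimes_eq, Set.ncard_image_of_injOn hinj, count_sparse]

end

end AdjMinors

theorem card_minimalPrimes_adjacent_minors (k : Type) [Field k] (m : ℕ) :
    (Ideal.minimalPrimes (adjacentMinorsIdeal k m)).ncard = Nat.fib (m + 1) :=
  AdjMinors.main

end
end
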